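/- Let η be a pure parallel spinor on a Ricci-flat Kähler manifold, so that γ^{ī}η = 0 for all antiholomorphic Clifford generators and the curvature satisfies R_{ij} = R_{ī j̄} = 0 (only mixed components R_{i j̄} survive). Then the third-order field B⁽²⁾(R; η, η) = γ^k η ∧ γ^l η ⊗ R_{kl} vanishes: γ^k η ∧ γ^l η R_{kl} = 0. -/
import Mathlib


/-- on a Ricci-flat Kähler manifold (curvature with only mixed
components, expressed in real indices `Fin n ⊕ Fin n` by the conditions
`hR1`, `hR2`), a pure parallel spinor `η` (i.e. `γ^ī η = 0`, expressed by
`hpure`) satisfies `B⁽²⁾(R;η,η) = Σ_{k,l} γ^k η ∧ γ^l η ⊗ R_{kl} = 0`.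
Here `w` is the wedge-tensor pairing `S × S × End → Λ²S ⊗ End`. -/
theorem stmt_14 {S E W : Type*} [AddCommGroup S] [Module ℂ S]
    [AddCommGroup E] [Module ℂ E] [AddCommGroup W] [Module ℂ W] {n : ℕ}
    (γ : (Fin n ⊕ Fin n) → S →ₗ[ℂ] S)
    (R : (Fin n ⊕ Fin n) → (Fin n ⊕ Fin n) → E)
    (w : S →ₗ[ℂ] S →ₗ[ℂ] E →ₗ[ℂ] W)
    (halt : ∀ a b e, w a b e = - w b a e)
    (hR1 : ∀ i j, R (.inl i) (.inl j) = R (.inr i) (.inr j))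
    (hR2 : ∀ i j, R (.inl i) (.inr j) = - R (.inr i) (.inl j))
    (η : S)
    (hpure : ∀ i, γ (.inl i) η + Complex.I • γ (.inr i) η = 0) :
    ∑ k, ∑ l, w (γ k η) (γ l η) (R k l) = 0 := by
  have ha : ∀ i, γ (Sum.inl i) η = -(Complex.I • γ (Sum.inr i) η) := fun i =>
    eq_neg_of_add_eq_zero_left (hpure i)
  have hR2' : ∀ i j, R (Sum.inr i) (Sum.inl j) = -(R (Sum.inl i) (Sum.inr j)) := fun i j => by
    rw [hR2, neg_neg]
  rw [Fintype.sum_sum_type]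
  simp only [Fintype.sum_sum_type]
  rw [← Finset.sum_add_distrib]
  apply Finset.sum_eq_zero
  intro i _
  rw [← Finset.sum_add_distrib, ← Finset.sum_add_distrib, ← Finset.sum_add_distrib]
  apply Finset.sum_eq_zero
  intro j _
  simp only [ha, hR1, hR2', map_neg, map_smul, LinearMap.neg_apply, LinearMap.smul_apply,
    smul_smul, Complex.I_mul_I, neg_one_smul, neg_neg, smul_neg, neg_smul]
  module
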